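/- Let s ≥ 0 and ε > 0. Then there exists a constant C > 0 (depending only on s and ε) such that for all sequences a, b : ℤ → ℂ, the sequence II(k) := Σ_{k'∈ℤ, 0 < |k'| < |k|/2} (⟨k⟩^s − ⟨k'⟩^s) · (i k') · a(k−k') · b(k') satisfies ‖II‖_{ℓ²} ≤ C ‖a‖_{ℓ²_s} ‖b‖_{ℓ²_{3/2+ε}}. -/

import Mathlib

open scoped ENNReal

/-- Japanese bracket `⟨k⟩ = (1 + k²)^(1/2)` for an integer `k`. -/
noncomputable def jb (k : ℤ) : ℝ := Real.sqrt (1 + (k : ℝ) ^ 2)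

/-- Weighted `ℓ²_s` norm of a sequence `a : ℤ → ℂ`, valued in `[0,∞]`. -/
noncomputable def l2 (s : ℝ) (a : ℤ → ℂ) : ℝ≥0∞ :=
  (∑' k : ℤ, ENNReal.ofReal (jb k ^ (2 * s) * ‖a k‖ ^ 2)) ^ (1 / 2 : ℝ)


lemma jb_pos (k : ℤ) : 0 < jb k := Real.sqrt_pos.2 (by positivity)

lemma one_le_jb (k : ℤ) : 1 ≤ jb k := by
  have := Real.sqrt_le_sqrt (show (1:ℝ) ≤ 1 + (k:ℝ)^2 by nlinarith [sq_nonneg ((k:ℝ))])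
  simpa [jb] using this

lemma abs_le_jb (k : ℤ) : |(k:ℝ)| ≤ jb k := by
  rw [jb, ← Real.sqrt_sq_eq_abs]
  exact Real.sqrt_le_sqrt (by nlinarith)

lemma jb_mono {m k : ℤ} (h : |m| ≤ |k|) : jb m ≤ jb k := by
  have h' : |(m:ℝ)| ≤ |(k:ℝ)| := by rw [← Int.cast_abs, ← Int.cast_abs]; exact_mod_cast h
  apply Real.sqrt_le_sqrt
  nlinarith [abs_nonneg (m:ℝ), abs_nonneg (k:ℝ), sq_abs (m:ℝ), sq_abs (k:ℝ)]

lemma jb_le_two {k m : ℤ} (h : 2 * |m| < |k|) : jb k ≤ 2 * jb (k - m) := by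
  have h1 : |k| ≤ 2 * |k - m| := by
    have := abs_sub_abs_le_abs_sub k m
    omega
  have h1' : |(k:ℝ)| ≤ 2 * |((k - m : ℤ):ℝ)| := by exact_mod_cast h1
  have : (2:ℝ) * jb (k - m) = Real.sqrt (4 * (1 + ((k - m : ℤ):ℝ)^2)) := by
    rw [jb, show (4:ℝ) * (1 + ((k - m : ℤ):ℝ)^2) = 2^2 * (1 + ((k - m : ℤ):ℝ)^2) by ring,
      Real.sqrt_mul (by positivity), Real.sqrt_sq (by norm_num)]
  rw [this, jb]
  apply Real.sqrt_le_sqrt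
  nlinarith [sq_abs (k:ℝ), sq_abs ((k - m:ℤ):ℝ), abs_nonneg (k:ℝ), abs_nonneg ((k-m:ℤ):ℝ)]

open MeasureTheory in
lemma tsum_mul_le_CS (u v : ℤ → ℝ≥0∞) :
    ∑' m, u m * v m ≤ (∑' m, u m ^ (2:ℝ)) ^ (1/2:ℝ) * (∑' m, v m ^ (2:ℝ)) ^ (1/2:ℝ) := by
  have hpq : Real.HolderConjugate 2 2 := Real.HolderConjugate.two_two
  have := ENNReal.lintegral_mul_le_Lp_mul_Lq (Measure.count (α := ℤ)) hpq
    (f := u) (g := v) (Measurable.aemeasurable (by measurability))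
    (Measurable.aemeasurable (by measurability))
  simpa [lintegral_count] using this

lemma T_ne_top {p : ℝ} (hp : 1 < p) : (∑' m : ℤ, ENNReal.ofReal (jb m ^ (-p))) ≠ ⊤ := by
  have hsum : Summable (fun m : ℤ => |(m:ℝ)| ^ (-p) + if m = 0 then (1:ℝ) else 0) :=
    (Real.summable_abs_int_rpow hp).add ⟨_, hasSum_ite_eq 0 1⟩
  have hle : ∀ m : ℤ, jb m ^ (-p) ≤ |(m:ℝ)| ^ (-p) + if m = 0 then (1:ℝ) else 0 := by
    intro m
    by_cases hm : m = 0
    · subst hm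
      simp [jb, Real.zero_rpow (by linarith : -p ≠ 0), Real.one_rpow]
    · have h1 : (1:ℝ) ≤ |(m:ℝ)| := by
        rw [← Int.cast_abs]; exact_mod_cast Int.one_le_abs hm
      have h2 := Real.rpow_le_rpow_of_nonpos (by linarith : (0:ℝ) < |(m:ℝ)|)
        (abs_le_jb m) (by linarith : -p ≤ 0)
      simp only [hm, if_false, add_zero]
      exact h2
  have hS : Summable (fun m : ℤ => jb m ^ (-p)) :=
    Summable.of_nonneg_of_le (fun m => Real.rpow_nonneg (jb_pos m).le _) hle hsum
  rw [← ENNReal.ofReal_tsum_of_nonneg (fun m => Real.rpow_nonneg (jb_pos m).le _) hS]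
  exact ENNReal.ofReal_ne_top

lemma diff_le (s : ℝ) (hs : 0 ≤ s) {k m : ℤ} (h2 : 2*|m| < |k|) :
    |jb k ^ s - jb m ^ s| ≤ 2 ^ s * jb (k - m) ^ s := by
  have hm : |m| ≤ |k| := by have := abs_nonneg m; omega
  have h1 : jb m ^ s ≤ jb k ^ s := Real.rpow_le_rpow (jb_pos m).le (jb_mono hm) hs
  have h0 : 0 ≤ jb m ^ s := Real.rpow_nonneg (jb_pos m).le s
  rw [abs_of_nonneg (by linarith)]
  have h3 : jb k ^ s ≤ (2 * jb (k-m)) ^ s := Real.rpow_le_rpow (jb_pos k).le (jb_le_two h2) hs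
  rw [Real.mul_rpow (by norm_num) (jb_pos _).le] at h3
  linarith

noncomputable def Aw (s : ℝ) (a : ℤ → ℂ) (j : ℤ) : ℝ≥0∞ := ENNReal.ofReal (jb j ^ s * ‖a j‖)

noncomputable def Bw (b : ℤ → ℂ) (m : ℤ) : ℝ≥0∞ := ENNReal.ofReal (|(m:ℝ)| * ‖b m‖)


lemma Aw_sq (s : ℝ) (a : ℤ → ℂ) (j : ℤ) :
    Aw s a j ^ (2:ℝ) = ENNReal.ofReal (jb j ^ (2*s) * ‖a j‖^2) := by
  rw [Aw, ENNReal.ofReal_rpow_of_nonneg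
    (mul_nonneg (Real.rpow_nonneg (jb_pos j).le s) (norm_nonneg _)) (by norm_num)]
  have h1 : (jb j ^ s) ^ (2:ℝ) = jb j ^ (2*s) := by
    rw [← Real.rpow_mul (jb_pos j).le, mul_comm s 2]
  have h2 : ‖a j‖ ^ (2:ℝ) = ‖a j‖ ^ 2 := by
    rw [show (2:ℝ) = ((2:ℕ):ℝ) by norm_num, Real.rpow_natCast]
  rw [Real.mul_rpow (Real.rpow_nonneg (jb_pos j).le s) (norm_nonneg _), h1, h2]

lemma l2_eq (s : ℝ) (a : ℤ → ℂ) : l2 s a = (∑' k : ℤ, Aw s a k ^ (2:ℝ)) ^ (1/2:ℝ) := by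
  rw [l2]
  exact congrArg (· ^ (1/2:ℝ)) (tsum_congr fun k => (Aw_sq s a k).symm)


lemma half_half (x : ℝ≥0∞) : x ^ (1/2:ℝ) * x ^ (1/2:ℝ) = x := by
  rw [← ENNReal.rpow_add_of_nonneg _ _ (by norm_num) (by norm_num)]
  norm_num

lemma sq_half (x : ℝ≥0∞) : (x ^ (1/2:ℝ)) ^ (2:ℝ) = x := by
  rw [← ENNReal.rpow_mul]; norm_num

lemma conv_CS (A B : ℤ → ℝ≥0∞) (k : ℤ) :
    ∑' m, A (k - m) * B m
      ≤ (∑' m, B m) ^ (1/2:ℝ) * (∑' m, B m * A (k - m) ^ (2:ℝ)) ^ (1/2:ℝ) := by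
  have h := tsum_mul_le_CS (fun m => B m ^ (1/2:ℝ)) (fun m => B m ^ (1/2:ℝ) * A (k - m))
  simp only [sq_half] at h
  have e2 : ∀ m : ℤ, ((B m ^ (1/2:ℝ) * A (k-m)) ^ (2:ℝ)) = B m * A (k-m) ^ (2:ℝ) := fun m => by
    rw [ENNReal.mul_rpow_of_nonneg _ _ (by norm_num), sq_half]
  simp only [e2] at h
  calc ∑' m, A (k-m) * B m = ∑' m, (B m ^ (1/2:ℝ)) * (B m ^ (1/2:ℝ) * A (k-m)) := by
        refine tsum_congr fun m => ?_
        rw [← mul_assoc, half_half, mul_comm]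
    _ ≤ _ := h

lemma step1 (s : ℝ) (hs : 0 ≤ s) (a b : ℤ → ℂ) (k : ℤ) :
    ENNReal.ofReal ‖∑' k' : {m : ℤ // m ≠ 0 ∧ 2 * |m| < |k|},
        Complex.ofReal (jb k ^ s - jb k'.1 ^ s) * (Complex.I * (k'.1 : ℂ)) *
          a (k - k'.1) * b k'.1‖
      ≤ ENNReal.ofReal (2^s) * ∑' m : ℤ, Aw s a (k - m) * Bw b m := by
  haveI : Finite {m : ℤ // m ≠ 0 ∧ 2 * |m| < |k|} := by
    apply Set.Finite.to_subtype (s := {m : ℤ | m ≠ 0 ∧ 2 * |m| < |k|})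
    apply (Set.finite_Icc (-|k|) |k|).subset
    intro m hm
    simp only [Set.mem_setOf_eq] at hm
    have h : |m| ≤ |k| := by have := abs_nonneg m; omega
    exact Set.mem_Icc.2 (abs_le.mp h)
  calc ENNReal.ofReal ‖∑' k' : {m : ℤ // m ≠ 0 ∧ 2 * |m| < |k|},
        Complex.ofReal (jb k ^ s - jb k'.1 ^ s) * (Complex.I * (k'.1 : ℂ)) *
          a (k - k'.1) * b k'.1‖
      ≤ ENNReal.ofReal (∑' k' : {m : ℤ // m ≠ 0 ∧ 2 * |m| < |k|},
          ‖Complex.ofReal (jb k ^ s - jb k'.1 ^ s) * (Complex.I * (k'.1 : ℂ)) *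
          a (k - k'.1) * b k'.1‖) :=
        ENNReal.ofReal_le_ofReal (norm_tsum_le_tsum_norm (Summable.of_finite))
    _ = ∑' k' : {m : ℤ // m ≠ 0 ∧ 2 * |m| < |k|},
          ENNReal.ofReal ‖Complex.ofReal (jb k ^ s - jb k'.1 ^ s) * (Complex.I * (k'.1 : ℂ)) *
          a (k - k'.1) * b k'.1‖ :=
        ENNReal.ofReal_tsum_of_nonneg (fun _ => norm_nonneg _) (Summable.of_finite)
    _ ≤ ∑' m : ℤ, ENNReal.ofReal (2^s) * (Aw s a (k - m) * Bw b m) := by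
        refine ENNReal.summable.tsum_le_tsum_of_inj (Subtype.val) Subtype.val_injective
          (fun _ _ => zero_le) ?_ ENNReal.summable
        rintro ⟨m, hm0, hm2⟩
        set d := jb k ^ s - jb m ^ s with hd
        have hnorm : ‖Complex.ofReal d * (Complex.I * (m : ℂ)) *
            a (k - m) * b m‖ = |d| * |(m:ℝ)| * ‖a (k-m)‖ * ‖b m‖ := by
          simp [norm_mul]
        dsimp only
        rw [hnorm]
        have hb : |jb k ^ s - jb m ^ s| * |(m:ℝ)| * ‖a (k-m)‖ * ‖b m‖
            ≤ 2^s * ((jb (k-m) ^ s * ‖a (k-m)‖) * (|(m:ℝ)| * ‖b m‖)) := by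
          have hd := diff_le s hs hm2
          have h1 : |jb k ^ s - jb m ^ s| * |(m:ℝ)| * ‖a (k-m)‖ * ‖b m‖
              ≤ (2^s * jb (k-m)^s) * |(m:ℝ)| * ‖a (k-m)‖ * ‖b m‖ := by
            gcongr
          exact h1.trans_eq (by ring)
        refine (ENNReal.ofReal_le_ofReal hb).trans ?_
        rw [ENNReal.ofReal_mul (by positivity), ENNReal.ofReal_mul
          (mul_nonneg (Real.rpow_nonneg (jb_pos _).le s) (norm_nonneg _))]
        exact le_of_eq rfl
    _ = ENNReal.ofReal (2^s) * ∑' m : ℤ, Aw s a (k - m) * Bw b m := ENNReal.tsum_mul_left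

lemma double_sum (A B : ℤ → ℝ≥0∞) :
    ∑' k : ℤ, ∑' m : ℤ, B m * A (k - m) ^ (2:ℝ)
      = (∑' m, B m) * (∑' j, A j ^ (2:ℝ)) := by
  rw [ENNReal.tsum_comm]
  calc ∑' m : ℤ, ∑' k : ℤ, B m * A (k - m) ^ (2:ℝ)
      = ∑' m : ℤ, B m * ∑' k : ℤ, A (k - m) ^ (2:ℝ) := by
        exact tsum_congr fun m => ENNReal.tsum_mul_left
    _ = ∑' m : ℤ, B m * ∑' j : ℤ, A j ^ (2:ℝ) :=
        tsum_congr fun m =>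
          congrArg (fun z => B m * z) ((Equiv.subRight m).tsum_eq fun j => A j ^ (2:ℝ))
    _ = _ := ENNReal.tsum_mul_right

lemma sq_half' (x : ℝ≥0∞) : (x ^ (2:ℝ)) ^ (1/2:ℝ) = x := by
  rw [← ENNReal.rpow_mul]; norm_num

lemma rpow_two' (x : ℝ≥0∞) : x ^ (2:ℝ) = x * x := by
  rw [show (2:ℝ) = ((2:ℕ):ℝ) by norm_num, ENNReal.rpow_natCast, pow_two]

lemma l2_zero (f : ℤ → ℂ) : l2 0 f = (∑' k : ℤ, (ENNReal.ofReal ‖f k‖) ^ (2:ℝ)) ^ (1/2:ℝ) := by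
  rw [l2]
  refine congrArg (· ^ (1/2:ℝ)) (tsum_congr fun k => ?_)
  rw [ENNReal.ofReal_rpow_of_nonneg (norm_nonneg _) (by norm_num),
    show (2:ℝ)*0 = 0 by ring, Real.rpow_zero, one_mul,
    show (2:ℝ) = ((2:ℕ):ℝ) by norm_num, Real.rpow_natCast]

lemma hB_bound (ε : ℝ) (hε : 0 < ε) (b : ℤ → ℂ) :
    ∑' m : ℤ, Bw b m
      ≤ (∑' m : ℤ, ENNReal.ofReal (jb m ^ (-(1+2*ε)))) ^ (1/2:ℝ) * l2 (3/2+ε) b := by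
  have hpt : ∀ m : ℤ, Bw b m ≤ ENNReal.ofReal (jb m ^ (-(1/2+ε))) * Aw (3/2+ε) b m := by
    intro m
    rw [Bw, Aw, ← ENNReal.ofReal_mul (Real.rpow_nonneg (jb_pos m).le _)]
    apply ENNReal.ofReal_le_ofReal
    have h1 : jb m ^ (-(1/2+ε)) * (jb m ^ ((3:ℝ)/2+ε) * ‖b m‖) = jb m * ‖b m‖ := by
      rw [← mul_assoc, ← Real.rpow_add (jb_pos m), show -(1/2+ε) + ((3:ℝ)/2+ε) = 1 by ring,
        Real.rpow_one]
    rw [h1]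
    exact mul_le_mul_of_nonneg_right (abs_le_jb m) (norm_nonneg _)
  have hu : ∀ m : ℤ, (ENNReal.ofReal (jb m ^ (-(1/2+ε)))) ^ (2:ℝ)
      = ENNReal.ofReal (jb m ^ (-(1+2*ε))) := by
    intro m
    rw [ENNReal.ofReal_rpow_of_nonneg (Real.rpow_nonneg (jb_pos m).le _) (by norm_num),
      ← Real.rpow_mul (jb_pos m).le, show -(1/2+ε) * 2 = -(1+2*ε) by ring]
  calc ∑' m : ℤ, Bw b m
      ≤ ∑' m : ℤ, ENNReal.ofReal (jb m ^ (-(1/2+ε))) * Aw (3/2+ε) b m :=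
        ENNReal.tsum_le_tsum hpt
    _ ≤ (∑' m : ℤ, (ENNReal.ofReal (jb m ^ (-(1/2+ε)))) ^ (2:ℝ)) ^ (1/2:ℝ)
          * (∑' m : ℤ, Aw (3/2+ε) b m ^ (2:ℝ)) ^ (1/2:ℝ) := tsum_mul_le_CS _ _
    _ = _ := by rw [tsum_congr hu, ← l2_eq]

/-- Low-inner-frequency piece (region `0 < |k'| < |k|/2`) of the commutator, `s ≥ 0`:
`‖II‖_{ℓ²} ≤ C ‖a‖_{ℓ²_s} ‖b‖_{ℓ²_{3/2+ε}}`. -/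
theorem commutator_low_piece (s ε : ℝ) (hs : 0 ≤ s) (hε : 0 < ε) :
    ∃ C : ℝ, 0 < C ∧ ∀ a b : ℤ → ℂ,
      l2 0 (fun k => ∑' k' : {m : ℤ // m ≠ 0 ∧ 2 * |m| < |k|},
          Complex.ofReal (jb k ^ s - jb k'.1 ^ s) * (Complex.I * (k'.1 : ℂ)) *
            a (k - k'.1) * b k'.1)
        ≤ ENNReal.ofReal C * (l2 s a * l2 (3 / 2 + ε) b) := by
  set T := ∑' m : ℤ, ENNReal.ofReal (jb m ^ (-(1+2*ε))) with hTdef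
  have hT : T ≠ ⊤ := T_ne_top (by linarith)
  have hpos : (0:ℝ) < 2^s * T.toReal ^ (1/2:ℝ) + 1 := by
    have h1 : (0:ℝ) ≤ T.toReal ^ (1/2:ℝ) := Real.rpow_nonneg ENNReal.toReal_nonneg _
    have h2 : (0:ℝ) < 2^s := Real.rpow_pos_of_pos two_pos s
    nlinarith
  refine ⟨2^s * T.toReal ^ (1/2:ℝ) + 1, hpos, fun a b => ?_⟩
  set c := ENNReal.ofReal ((2:ℝ)^s) with hc
  set A := Aw s a with hA
  set B := Bw b with hBdef
  set II : ℤ → ℂ := fun k => ∑' k' : {m : ℤ // m ≠ 0 ∧ 2 * |m| < |k|},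
      Complex.ofReal (jb k ^ s - jb k'.1 ^ s) * (Complex.I * (k'.1 : ℂ)) *
        a (k - k'.1) * b k'.1 with hII
  have hpoint : ∀ k : ℤ, ENNReal.ofReal ‖II k‖ ≤ c * ∑' m : ℤ, A (k - m) * B m :=
    fun k => step1 s hs a b k
  have key : ∑' k : ℤ, (ENNReal.ofReal ‖II k‖) ^ (2:ℝ)
      ≤ (c * ∑' m : ℤ, B m) ^ (2:ℝ) * (∑' j : ℤ, A j ^ (2:ℝ)) := by
    calc ∑' k : ℤ, (ENNReal.ofReal ‖II k‖) ^ (2:ℝ)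
        ≤ ∑' k : ℤ, (c * ((∑' m : ℤ, B m) ^ (1/2:ℝ)
            * (∑' m : ℤ, B m * A (k - m) ^ (2:ℝ)) ^ (1/2:ℝ))) ^ (2:ℝ) := by
          refine ENNReal.tsum_le_tsum fun k => ENNReal.rpow_le_rpow ?_ (by norm_num)
          exact (hpoint k).trans (mul_le_mul_right (conv_CS A B k) c)
      _ = ∑' k : ℤ, c ^ (2:ℝ) * ((∑' m : ℤ, B m) * ∑' m : ℤ, B m * A (k - m) ^ (2:ℝ)) := by
          refine tsum_congr fun k => ?_
          rw [ENNReal.mul_rpow_of_nonneg _ _ (by norm_num),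
            ENNReal.mul_rpow_of_nonneg _ _ (by norm_num), sq_half, sq_half]
      _ = c ^ (2:ℝ) * ((∑' m : ℤ, B m) * ∑' k : ℤ, ∑' m : ℤ, B m * A (k - m) ^ (2:ℝ)) := by
          rw [ENNReal.tsum_mul_left, ENNReal.tsum_mul_left]
      _ = c ^ (2:ℝ) * ((∑' m : ℤ, B m) * ((∑' m : ℤ, B m) * ∑' j : ℤ, A j ^ (2:ℝ))) := by
          rw [double_sum]
      _ = (c * ∑' m : ℤ, B m) ^ (2:ℝ) * (∑' j : ℤ, A j ^ (2:ℝ)) := by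
          rw [ENNReal.mul_rpow_of_nonneg _ _ (by norm_num), rpow_two', rpow_two']
          ring
  have hBb : ∑' m : ℤ, B m ≤ T ^ (1/2:ℝ) * l2 (3/2+ε) b := hB_bound ε hε b
  have hCfin : c * T ^ (1/2:ℝ) ≤ ENNReal.ofReal (2^s * T.toReal ^ (1/2:ℝ) + 1) := by
    have h1 : T ^ (1/2:ℝ) = ENNReal.ofReal (T.toReal ^ (1/2:ℝ)) := by
      rw [← ENNReal.ofReal_rpow_of_nonneg ENNReal.toReal_nonneg (by norm_num),
        ENNReal.ofReal_toReal hT]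
    rw [h1, hc, ← ENNReal.ofReal_mul (le_of_lt (Real.rpow_pos_of_pos two_pos s))]
    exact ENNReal.ofReal_le_ofReal (le_add_of_nonneg_right zero_le_one)
  calc l2 0 II = (∑' k : ℤ, (ENNReal.ofReal ‖II k‖) ^ (2:ℝ)) ^ (1/2:ℝ) := l2_zero II
    _ ≤ ((c * ∑' m : ℤ, B m) ^ (2:ℝ) * (∑' j : ℤ, A j ^ (2:ℝ))) ^ (1/2:ℝ) :=
        ENNReal.rpow_le_rpow key (by norm_num)
    _ = (c * ∑' m : ℤ, B m) * (∑' j : ℤ, A j ^ (2:ℝ)) ^ (1/2:ℝ) := by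
        rw [ENNReal.mul_rpow_of_nonneg _ _ (by norm_num), sq_half']
    _ = (c * ∑' m : ℤ, B m) * l2 s a := by rw [hA, ← l2_eq]
    _ ≤ (c * (T ^ (1/2:ℝ) * l2 (3/2+ε) b)) * l2 s a :=
        mul_le_mul_left (mul_le_mul_right hBb c) _
    _ = (c * T ^ (1/2:ℝ)) * (l2 s a * l2 (3/2+ε) b) := by ring
    _ ≤ ENNReal.ofReal (2^s * T.toReal ^ (1/2:ℝ) + 1) * (l2 s a * l2 (3/2+ε) b) :=
        mul_le_mul_left hCfin _
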